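/- Let P ≥ 1 and let (m₁,n₁),…,(m_P,n_P) be pairs of integers with 1 ≤ m_k ≤ n_k for each k; set N_k = m_k + n_k. Fix an index k₀ ∈ {1,…,P} and an edge path (i,j) with 1 ≤ i ≤ j ≤ N_{k₀} − 1. Then Σ over all tuples (T₁,…,T_P), where each T_k ⊆ {1,…,N_k} has |T_k| = m_k, of the signature ∏_{l=i}^{j} τ_{T_{k₀}}(l) equals ( ∏_{k ≠ k₀} C(m_k+n_k, m_k) ) · ( C(N_{k₀}, m_{k₀}) − 4·C(N_{k₀}−2, m_{k₀}−1) ) as integers; here C(a,b) denotes the binomial coefficient. -/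
import Mathlib


/-- The edge sign `τ_T(l)`: `+1` if `l ∈ T ↔ l + 1 ∈ T`, and `-1` otherwise. -/
def edgeSign (T : Finset ℕ) (l : ℕ) : ℤ :=
  if (l ∈ T ↔ l + 1 ∈ T) then 1 else -1

lemma prod_edgeSign (T : Finset ℕ) (i j : ℕ) (hij : i ≤ j) :
    ∏ l ∈ Finset.Icc i j, edgeSign T l =
      if (i ∈ T ↔ j + 1 ∈ T) then 1 else -1 := by
  induction j, hij using Nat.le_induction with
  | base => simp [edgeSign]
  | succ j hij ih =>
    rw [Finset.prod_Icc_succ_top (le_trans hij (Nat.le_succ j)), ih]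
    by_cases h1 : i ∈ T <;> by_cases h2 : j + 1 ∈ T <;> by_cases h3 : j + 1 + 1 ∈ T <;>
      simp [edgeSign, h1, h2, h3]

lemma count_filter (s : Finset ℕ) (i a : ℕ) (hi : i ∈ s) (ha : a ∈ s) (hia : i ≠ a)
    (m : ℕ) (hm : 1 ≤ m) :
    ((s.powersetCard m).filter (fun T => i ∈ T ∧ a ∉ T)).card
      = (s.card - 2).choose (m - 1) := by
  have hcard : ((s.erase a).erase i).card = s.card - 2 := by
    rw [Finset.card_erase_of_mem (Finset.mem_erase.2 ⟨hia, hi⟩),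
      Finset.card_erase_of_mem ha]
    omega
  have key : ((s.powersetCard m).filter (fun T => i ∈ T ∧ a ∉ T)).card
      = (((s.erase a).erase i).powersetCard (m - 1)).card := by
    apply Finset.card_bij' (fun T _ => T.erase i) (fun S _ => insert i S)
    · intro T hT
      simp only [Finset.mem_filter] at hT
      exact Finset.insert_erase hT.2.1
    · intro S hS
      rw [Finset.mem_powersetCard] at hS
      exact Finset.erase_insert (fun h => (Finset.mem_erase.1 (hS.1 h)).1 rfl)
    · intro T hT
      simp only [Finset.mem_filter, Finset.mem_powersetCard] at hT
      obtain ⟨⟨hsub, hc⟩, hiT, haT⟩ := hT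
      rw [Finset.mem_powersetCard]
      constructor
      · intro x hx
        rw [Finset.mem_erase] at hx ⊢
        refine ⟨hx.1, Finset.mem_erase.2 ⟨?_, hsub hx.2⟩⟩
        rintro rfl; exact haT hx.2
      · rw [Finset.card_erase_of_mem hiT, hc]
    · intro S hS
      rw [Finset.mem_powersetCard] at hS
      obtain ⟨hsub, hc⟩ := hS
      have hiS : i ∉ S := fun h => (Finset.mem_erase.1 (hsub h)).1 rfl
      simp only [Finset.mem_filter, Finset.mem_powersetCard]
      refine ⟨⟨?_, ?_⟩, Finset.mem_insert_self i S, ?_⟩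
      · intro x hx
        rcases Finset.mem_insert.1 hx with rfl | hx
        · exact hi
        · exact Finset.mem_of_mem_erase (Finset.mem_of_mem_erase (hsub hx))
      · rw [Finset.card_insert_of_notMem hiS, hc, Nat.sub_add_cancel hm]
      · intro h
        rcases Finset.mem_insert.1 h with h | h
        · exact hia h.symm
        · exact (Finset.mem_erase.1 (Finset.mem_of_mem_erase (hsub h))).1 rfl
  rw [key, Finset.card_powersetCard, hcard]

lemma single_block (N m i a : ℕ) (hm : 1 ≤ m) (hi : i ∈ Finset.Icc 1 N)
    (ha : a ∈ Finset.Icc 1 N) (hia : i ≠ a) :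
    ∑ T ∈ Finset.powersetCard m (Finset.Icc 1 N),
        (if (i ∈ T ↔ a ∈ T) then (1 : ℤ) else -1)
      = (N.choose m : ℤ) - 4 * ((N - 2).choose (m - 1) : ℤ) := by
  have key : ∀ T : Finset ℕ, (if (i ∈ T ↔ a ∈ T) then (1 : ℤ) else -1)
      = 1 - 2 * ((if i ∈ T ∧ a ∉ T then (1 : ℤ) else 0)
          + (if a ∈ T ∧ i ∉ T then (1 : ℤ) else 0)) := by
    intro T
    by_cases h1 : i ∈ T <;> by_cases h2 : a ∈ T <;> simp [h1, h2]
  simp only [key]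
  rw [Finset.sum_sub_distrib, Finset.sum_const, ← Finset.mul_sum, Finset.sum_add_distrib,
    Finset.sum_boole, Finset.sum_boole]
  have c1 := count_filter (Finset.Icc 1 N) i a hi ha hia m hm
  have c2 := count_filter (Finset.Icc 1 N) a i ha hi (Ne.symm hia) m hm
  have hN : (Finset.Icc 1 N).card = N := by
    rw [Nat.card_Icc]; omega
  rw [hN] at c1 c2
  have hcard : (Finset.powersetCard m (Finset.Icc 1 N)).card = N.choose m := by
    rw [Finset.card_powersetCard, hN]
  rw [hcard, c1, c2]
  push_cast
  ring

lemma piFinset_factor {P : ℕ} (t : Fin P → Finset (Finset ℕ)) (k₀ : Fin P)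
    (g : Finset ℕ → ℤ) :
    ∑ T ∈ Fintype.piFinset t, g (T k₀)
      = (∑ x ∈ t k₀, g x) * ∏ k ∈ Finset.univ.erase k₀, ((t k).card : ℤ) := by
  have h1 : ∑ T ∈ Fintype.piFinset t, g (T k₀)
      = ∑ T ∈ Fintype.piFinset t, ∏ k : Fin P, (if k = k₀ then g (T k) else 1) := by
    refine Finset.sum_congr rfl fun T _ => ?_
    rw [Finset.prod_ite_eq' Finset.univ k₀ (fun k => g (T k))]
    simp
  rw [h1, ← Finset.prod_univ_sum t (fun k x => if k = k₀ then g x else 1)]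
  have inner : ∀ k, (∑ x ∈ t k, if k = k₀ then g x else 1)
      = if k = k₀ then ∑ x ∈ t k₀, g x else ((t k).card : ℤ) := by
    intro k
    by_cases h : k = k₀
    · subst h; simp
    · simp [h]
  rw [Finset.prod_congr rfl (fun k _ => inner k),
    ← Finset.mul_prod_erase Finset.univ _ (Finset.mem_univ k₀)]
  simp only [if_pos rfl]
  congr 1
  exact Finset.prod_congr rfl fun k hk => if_neg (Finset.mem_erase.1 hk).1

/-- Let `P ≥ 1` and let `(m k, n k)`, `k : Fin P`, be pairs of integers with
`1 ≤ m k ≤ n k`; set `N k = m k + n k`.  Fix `k₀` and an edge path `(i,j)` with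
`1 ≤ i ≤ j ≤ N k₀ − 1`.  Then the sum over all tuples `(T k)_k`, where each
`T k ⊆ {1,…,N k}` has `|T k| = m k`, of the signature `∏_{l=i}^{j} τ_{T k₀}(l)`
equals `(∏_{k ≠ k₀} C(m k + n k, m k)) · (C(N k₀, m k₀) − 4·C(N k₀ − 2, m k₀ − 1))`
as integers. -/
theorem block_factorization (P : ℕ) (hP : 1 ≤ P) (m n : Fin P → ℕ)
    (hm : ∀ k, 1 ≤ m k) (hmn : ∀ k, m k ≤ n k) (k₀ : Fin P)
    (i j : ℕ) (hi : 1 ≤ i) (hij : i ≤ j) (hj : j ≤ m k₀ + n k₀ - 1) :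
    ∑ T ∈ Fintype.piFinset
        (fun k => Finset.powersetCard (m k) (Finset.Icc 1 (m k + n k))),
        ∏ l ∈ Finset.Icc i j, edgeSign (T k₀) l =
      (∏ k ∈ Finset.univ.erase k₀, ((m k + n k).choose (m k) : ℤ)) *
        (((m k₀ + n k₀).choose (m k₀) : ℤ) -
          4 * ((m k₀ + n k₀ - 2).choose (m k₀ - 1) : ℤ)) := by
  have hNk₀ : 2 ≤ m k₀ + n k₀ := by
    have := hm k₀; have := hmn k₀; omega
  have step1 : ∀ T ∈ Fintype.piFinset
      (fun k => Finset.powersetCard (m k) (Finset.Icc 1 (m k + n k))),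
      ∏ l ∈ Finset.Icc i j, edgeSign (T k₀) l
        = (fun S => if (i ∈ S ↔ j + 1 ∈ S) then (1 : ℤ) else -1) (T k₀) :=
    fun T _ => prod_edgeSign (T k₀) i j hij
  rw [Finset.sum_congr rfl step1,
    piFinset_factor (fun k => Finset.powersetCard (m k) (Finset.Icc 1 (m k + n k))) k₀
      (fun S => if (i ∈ S ↔ j + 1 ∈ S) then (1 : ℤ) else -1)]
  have hi' : i ∈ Finset.Icc 1 (m k₀ + n k₀) := by rw [Finset.mem_Icc]; omega
  have hj' : j + 1 ∈ Finset.Icc 1 (m k₀ + n k₀) := by rw [Finset.mem_Icc]; omega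
  have hij' : i ≠ j + 1 := by omega
  rw [single_block (m k₀ + n k₀) (m k₀) i (j + 1) (hm k₀) hi' hj' hij']
  have hcards : ∀ k : Fin P,
      (((Finset.powersetCard (m k) (Finset.Icc 1 (m k + n k))).card : ℤ))
        = ((m k + n k).choose (m k) : ℤ) := by
    intro k
    rw [Finset.card_powersetCard, Nat.card_Icc]
    norm_num
  rw [Finset.prod_congr rfl (fun k _ => hcards k)]
  ring
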